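/- Let T be a triangulated category with coproducts, G ∈ T, and suppose D^b_coh ⊆ T is a full triangulated subcategory such that every object of D^b_coh admits, for each m, an m-isomorphism from an object of ⟨G⟩ (approximation). If Perf ⊆ ⟨G⟩ₙ, where Perf ⊆ D^b_coh is a full subcategory such that every E ∈ D^b_coh admits for every m an m-isomorphism P → E with P ∈ Perf, and D^b_coh is bounded, then ⟨G⟩ₙ = D^b_coh. Concretely: for a Noetherian algebraic stack X satisfying approximation by compact complexes and G ∈ D^b_coh(X), Perf(X) ⊆ ⟨G⟩ₙ if and only if ⟨G⟩ₙ = D^b_coh(X). -/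

import Mathlib

open CategoryTheory Limits Pretriangulated Opposite

universe w v u

namespace Paper

variable {C : Type u} [Category.{v} C] [Preadditive C] [HasZeroObject C]
  [HasShift C ℤ] [∀ n : ℤ, (shiftFunctor C n).Additive] [Pretriangulated C]
  [HasBinaryBiproducts C]

/-- `add S`: smallest strictly full subcategory containing `S` closed under shifts,
finite coproducts and retracts. -/
inductive addClosure (S : Set C) : C → Prop
  | of {X : C} (h : X ∈ S) : addClosure S X
  | zero {X : C} (h : IsZero X) : addClosure S X
  | iso {X Y : C} (e : X ≅ Y) (h : addClosure S X) : addClosure S Y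
  | shift {X : C} (n : ℤ) (h : addClosure S X) : addClosure S (X⟦n⟧)
  | biprod {X Y : C} (hX : addClosure S X) (hY : addClosure S Y) : addClosure S (X ⊞ Y)
  | retract {X Y : C} (i : X ⟶ Y) (r : Y ⟶ X) (hir : i ≫ r = 𝟙 X) (h : addClosure S Y) :
      addClosure S X

/-- objects arising as the cone of a morphism from an object of `A` to an object of `B`,
i.e. `E` with a distinguished triangle `X → Y → E → X[1]`, `X ∈ A`, `Y ∈ B`. -/
def coneSet (A B : Set C) : Set C :=
  {E | ∃ (X Y : C) (f : X ⟶ Y) (g : Y ⟶ E) (h : E ⟶ X⟦(1:ℤ)⟧),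
      Triangle.mk f g h ∈ (distTriang C) ∧ X ∈ A ∧ Y ∈ B}

/-- The level filtration `⟨S⟩ₙ`. -/
def level (S : Set C) : ℕ → Set C
  | 0 => addClosure (∅ : Set C)
  | 1 => addClosure S
  | (n+2) => addClosure (coneSet (level S (n+1)) (addClosure S))

/-- A thick subcategory: triangulated subcategory closed under retracts. -/
structure IsThick (S : Set C) : Prop where
  zero : ∀ X : C, IsZero X → X ∈ S
  iso : ∀ {X Y : C}, (X ≅ Y) → X ∈ S → Y ∈ S
  shift : ∀ (X : C) (n : ℤ), X ∈ S → X⟦n⟧ ∈ S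
  ext₂ : ∀ T : Triangle C, T ∈ (distTriang C) → T.obj₁ ∈ S → T.obj₃ ∈ S → T.obj₂ ∈ S
  retract : ∀ {X Y : C} (i : X ⟶ Y) (r : Y ⟶ X), i ≫ r = 𝟙 X → Y ∈ S → X ∈ S

/-- `⟨S⟩`, the smallest thick subcategory of `C` containing `S`. -/
def thickClosure (S : Set C) : Set C :=
  {X | ∀ T : Set C, IsThick T → S ⊆ T → X ∈ T}

end Paper

namespace Paper

variable {C : Type u} [Category.{v} C] [Preadditive C] [HasZeroObject C]
  [HasShift C ℤ] [∀ n : ℤ, (shiftFunctor C n).Additive] [Pretriangulated C]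
  [HasBinaryBiproducts C]

/-- `f` is an `m`-isomorphism (w.r.t. the t-structure `t`): in a distinguished triangle
`A ⟶ B ⟶ Q ⟶ A[1]` on `f`, the cone `Q` satisfies `τ^{≥ m} Q ≅ 0`, i.e. `Q ∈ D^{≤ m-1}`. -/
def IsMIso (t : Triangulated.TStructure C) (m : ℤ) {A B : C} (f : A ⟶ B) : Prop :=
  ∃ (Q : C) (g : B ⟶ Q) (h : Q ⟶ A⟦(1:ℤ)⟧),
    Triangle.mk f g h ∈ (distTriang C) ∧ t.le (m-1) Q

/-- An object `G` is compact if `Hom(G, -)` (as a functor to abelian groups) preserves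
small coproducts. -/
def IsCompactObj (G : C) : Prop :=
  ∀ (ι : Type v) (f : ι → C),
    Nonempty (PreservesColimit (Discrete.functor f) (preadditiveCoyoneda.obj (op G)))

variable [HasCountableCoproducts C]

/-- The map `1 - shift` on `∐ M` associated to a directed system. -/
noncomputable def oneMinusShift (M : ℕ → C) (f : ∀ n, M n ⟶ M (n+1)) : ∐ M ⟶ ∐ M :=
  Sigma.desc fun n => Sigma.ι M n - (f n ≫ Sigma.ι M (n+1))

/-- `(L, σ)` is a homotopy colimit of the system `(M, f)`: there is a distinguished triangle
`∐ M → ∐ M → L → (∐ M)[1]` whose first map is `1 - shift` and second map is `σ`. -/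
def IsHocolim (M : ℕ → C) (f : ∀ n, M n ⟶ M (n+1)) (L : C) (σ : ∐ M ⟶ L) : Prop :=
  ∃ δ : L ⟶ (∐ M)⟦(1:ℤ)⟧, Triangle.mk (oneMinusShift M f) σ δ ∈ (distTriang C)

end Paper

/-!
Let `G` be bounded for the t-structure. Every `P ∈ ⟨G⟩ₙ` can be truncated inside `⟨G⟩ₙ`: for
every `m` there is, up to a retract of `P`, a map `P → A` with `A ∈ ⟨G⟩ₙ`, `A ≥ m`, inducing an
isomorphism on `τ^{≥ m + c}`, where `c` depends only on `n` and the amplitude of `G`. For `G`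
itself take `G` or `0`; the five lemma for `Hom(-, W)`, `W ≥ m + c`, carries such truncations
through sums, shifts and cones.

If `E ∈ D^b` is `≥ a` and `p : P → E` is an `(a - c - 1)`-isomorphism from `P ∈ Perf ⊆ ⟨G⟩ₙ`,
then maps from `P` into objects `≥ a - c` factor uniquely through `p`, and maps from `P` into
objects `≥ a` factor, up to the retract, through the truncation `P → A` at `m = a - c`. Playing the
two factorizations against each other exhibits `E` as a retract of `A ∈ ⟨G⟩ₙ`.
-/

namespace CategoryTheory.Retract

variable {C : Type u} [Category.{v} C] [Preadditive C] [HasBinaryBiproducts C]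

noncomputable def biprod {X₁ Y₁ X₂ Y₂ : C} (ρ₁ : Retract X₁ Y₁) (ρ₂ : Retract X₂ Y₂) :
    Retract (X₁ ⊞ X₂) (Y₁ ⊞ Y₂) where
  i := biprod.map ρ₁.i ρ₂.i
  r := biprod.map ρ₁.r ρ₂.r

end CategoryTheory.Retract

namespace Paper

open ZeroObject

variable {C : Type u} [Category.{v} C] [Preadditive C] [HasZeroObject C]
  [HasShift C ℤ] [∀ n : ℤ, (shiftFunctor C n).Additive] [Pretriangulated C]

lemma injective_comp_hom₃ {T T' : Triangle C} (hT : T ∈ distTriang C)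
    (hT' : T' ∈ distTriang C) (f : T ⟶ T') (W : C)
    (h₁ : Function.Injective fun v : T'.obj₁⟦(1 : ℤ)⟧ ⟶ W => f.hom₁⟦(1 : ℤ)⟧' ≫ v)
    (h₂ : Function.Injective fun v : T'.obj₂ ⟶ W => f.hom₂ ≫ v)
    (h₂' : Function.Surjective fun v : T'.obj₂⟦(1 : ℤ)⟧ ⟶ W => f.hom₂⟦(1 : ℤ)⟧' ≫ v) :
    Function.Injective fun v : T'.obj₃ ⟶ W => f.hom₃ ≫ v := by
  suffices h : ∀ w : T'.obj₃ ⟶ W, f.hom₃ ≫ w = 0 → w = 0 by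
    intro v₁ v₂ hv
    rw [← sub_eq_zero]
    exact h _ (by simpa only [Preadditive.comp_sub, sub_eq_zero] using hv)
  intro w hw
  have hw₂ : T'.mor₂ ≫ w = 0 := h₂ (by simp only [← f.comm₂_assoc, hw, comp_zero])
  obtain ⟨w', rfl⟩ := T'.yoneda_exact₃ hT' w hw₂
  have hw₃ : T.mor₃ ≫ f.hom₁⟦(1 : ℤ)⟧' ≫ w' = 0 := by rw [f.comm₃_assoc, hw]
  obtain ⟨s, hs⟩ : ∃ s : T.obj₂⟦(1 : ℤ)⟧ ⟶ W,
      f.hom₁⟦(1 : ℤ)⟧' ≫ w' = (-T.mor₁⟦(1 : ℤ)⟧') ≫ s :=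
    T.rotate.yoneda_exact₃ (rot_of_distTriang _ hT) _ hw₃
  obtain ⟨s', rfl⟩ := h₂' s
  have hw' : w' = -(T'.mor₁⟦(1 : ℤ)⟧' ≫ s') := h₁ <| by
    change f.hom₁⟦(1 : ℤ)⟧' ≫ w' = f.hom₁⟦(1 : ℤ)⟧' ≫ (-(T'.mor₁⟦(1 : ℤ)⟧' ≫ s'))
    rw [hs, Preadditive.neg_comp, ← Functor.map_comp_assoc, f.comm₁, Functor.map_comp_assoc,
      Preadditive.comp_neg]
  rw [hw', Preadditive.comp_neg, comp_distTriang_mor_zero₃₁_assoc _ hT', zero_comp, neg_zero]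

lemma surjective_comp_hom₃ {T T' : Triangle C} (hT : T ∈ distTriang C)
    (hT' : T' ∈ distTriang C) (f : T ⟶ T') (W : C)
    (h₁ : Function.Injective fun v : T'.obj₁ ⟶ W => f.hom₁ ≫ v)
    (h₁' : Function.Surjective fun v : T'.obj₁⟦(1 : ℤ)⟧ ⟶ W => f.hom₁⟦(1 : ℤ)⟧' ≫ v)
    (h₂ : Function.Surjective fun v : T'.obj₂ ⟶ W => f.hom₂ ≫ v) :
    Function.Surjective fun v : T'.obj₃ ⟶ W => f.hom₃ ≫ v := by
  intro q
  obtain ⟨v, hv⟩ := h₂ (T.mor₂ ≫ q)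
  have hv₁ : T'.mor₁ ≫ v = 0 := h₁ <| by
    simp only [← f.comm₁_assoc, hv, comp_distTriang_mor_zero₁₂_assoc _ hT, zero_comp, comp_zero]
  obtain ⟨v₀, rfl⟩ := T'.yoneda_exact₂ hT' v hv₁
  obtain ⟨g, hg⟩ := T.yoneda_exact₃ hT (q - f.hom₃ ≫ v₀) <| by
    simp only [Preadditive.comp_sub, ← hv, f.comm₂_assoc, sub_self]
  obtain ⟨g', rfl⟩ := h₁' g
  refine ⟨v₀ + T'.mor₃ ≫ g', ?_⟩
  simp only [Preadditive.comp_add, ← f.comm₃_assoc, ← hg, add_sub_cancel]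

lemma nonempty_retract_obj₃ {T T' : Triangle C} (hT : T ∈ distTriang C)
    (hT' : T' ∈ distTriang C) (ρ₁ : Retract T.obj₁ T'.obj₁) (ρ₂ : Retract T.obj₂ T'.obj₂)
    (h : T'.mor₁ = ρ₁.r ≫ T.mor₁ ≫ ρ₂.i) : Nonempty (Retract T.obj₃ T'.obj₃) := by
  have hi : T.mor₁ ≫ ρ₂.i = ρ₁.i ≫ T'.mor₁ := by rw [h, ρ₁.retract_assoc]
  have hr : T'.mor₁ ≫ ρ₂.r = ρ₁.r ≫ T.mor₁ := by rw [h, Category.assoc, Category.assoc,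
    ρ₂.retract, Category.comp_id]
  obtain ⟨i₃, hi₂, hi₃⟩ := complete_distinguished_triangle_morphism T T' hT hT' ρ₁.i ρ₂.i hi
  obtain ⟨r₃, hr₂, hr₃⟩ := complete_distinguished_triangle_morphism T' T hT' hT ρ₁.r ρ₂.r hr
  have : IsIso (i₃ ≫ r₃) := isIso₃_of_isIso₁₂
    (Triangle.homMk _ _ ρ₁.i ρ₂.i i₃ hi hi₂ hi₃ ≫ Triangle.homMk _ _ ρ₁.r ρ₂.r r₃ hr hr₂ hr₃)
    hT hT (by simp only [comp_hom₁, Triangle.homMk_hom₁, ρ₁.retract]; infer_instance)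
    (by simp only [comp_hom₂, Triangle.homMk_hom₂, ρ₂.retract]; infer_instance)
  exact ⟨⟨i₃, r₃ ≫ inv (i₃ ≫ r₃), by rw [← Category.assoc, IsIso.hom_inv_id]⟩⟩

lemma coneSet_subset_of_isThick {A B D : Set C} (hD : IsThick D) (hA : A ⊆ D) (hB : B ⊆ D) :
    coneSet A B ⊆ D := by
  rintro E ⟨X, Y, f, g, h, hT, hX, hY⟩
  exact hD.ext₂ _ (rot_of_distTriang _ hT) (hB hY) (hD.shift X 1 (hA hX))

section Biproducts

variable [HasBinaryBiproducts C]

lemma addClosure_subset_of_isThick {S D : Set C} (hD : IsThick D) (hS : S ⊆ D) :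
    {X | addClosure S X} ⊆ D := fun _ hX => by
  induction hX with
  | of h => exact hS h
  | zero h => exact hD.zero _ h
  | iso e _ ih => exact hD.iso e ih
  | shift a _ ih => exact hD.shift _ a ih
  | biprod _ _ ihX ihY => exact hD.ext₂ _ (binaryBiproductTriangle_distinguished _ _) ihX ihY
  | retract i r hir _ ih => exact hD.retract i r hir ih

lemma level_subset_of_isThick {S D : Set C} (hD : IsThick D) (hS : S ⊆ D) :
    ∀ n : ℕ, level S n ⊆ D
  | 0 => addClosure_subset_of_isThick hD (Set.empty_subset D)
  | 1 => addClosure_subset_of_isThick hD hS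
  | n + 2 => addClosure_subset_of_isThick hD (coneSet_subset_of_isThick hD
      (level_subset_of_isThick hD hS (n + 1)) (addClosure_subset_of_isThick hD hS))

lemma mem_level_of_retract {S : Set C} {E A : C} (ρ : Retract E A) :
    ∀ {n : ℕ}, A ∈ level S n → E ∈ level S n
  | 0, hA | 1, hA | _ + 2, hA => addClosure.retract ρ.i ρ.r ρ.retract hA

end Biproducts

variable (t : Triangulated.TStructure C)

/-- `φ` induces an isomorphism `τ^{≥ k} T ≅ τ^{≥ k} A`, stated via morphisms into objects `≥ k`. -/
def IsGEIso (k : ℤ) {T A : C} (φ : T ⟶ A) : Prop :=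
  ∀ W : C, t.ge k W → Function.Bijective fun v : A ⟶ W => φ ≫ v

variable {t}

namespace IsGEIso

lemma id (k : ℤ) (A : C) : IsGEIso t k (𝟙 A) := fun _ _ => by
  simp only [Category.id_comp]
  exact Function.bijective_id

lemma mono {k k' : ℤ} {T A : C} {φ : T ⟶ A} (h : IsGEIso t k φ) (hk : k ≤ k') :
    IsGEIso t k' φ :=
  fun W hW => h W (t.ge_antitone hk W hW)

lemma of_isZero {b k : ℤ} {T A : C} (φ : T ⟶ A) (hT : t.le b T) (hA : IsZero A) (hbk : b < k) :
    IsGEIso t k φ := by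
  intro W hW
  refine ⟨fun v₁ v₂ _ => hA.eq_of_src v₁ v₂, fun q => ⟨0, ?_⟩⟩
  change φ ≫ 0 = q
  rw [comp_zero]
  exact (t.zero_of_isLE_of_isGE q b k hbk ⟨hT⟩ ⟨hW⟩).symm

lemma shift {k : ℤ} {T A : C} {φ : T ⟶ A} (a : ℤ) (h : IsGEIso t (k + a) φ) :
    IsGEIso t k (φ⟦a⟧') := by
  intro W hW
  let adj := (shiftEquiv C a).toAdjunction
  have hcomp : (fun v : A⟦a⟧ ⟶ W => φ⟦a⟧' ≫ v) =
      (adj.homEquiv T W).symm ∘ (fun x => φ ≫ x) ∘ adj.homEquiv A W := by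
    funext v
    exact (Equiv.eq_symm_apply _).2 (adj.homEquiv_naturality_left φ v)
  rw [hcomp]
  exact (adj.homEquiv T W).symm.bijective.comp
    ((h _ (t.ge_shift k (-a) (k + a) (by omega) W hW)).comp (adj.homEquiv A W).bijective)

lemma biprod [HasBinaryBiproducts C] {k : ℤ} {T₁ A₁ T₂ A₂ : C} {φ₁ : T₁ ⟶ A₁} {φ₂ : T₂ ⟶ A₂}
    (h₁ : IsGEIso t k φ₁) (h₂ : IsGEIso t k φ₂) : IsGEIso t k (biprod.map φ₁ φ₂) := by
  intro W hW
  refine ⟨fun v₁ v₂ hv => ?_, fun q => ?_⟩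
  · replace hv : biprod.map φ₁ φ₂ ≫ v₁ = biprod.map φ₁ φ₂ ≫ v₂ := hv
    apply biprod.hom_ext'
    · exact (h₁ W hW).1 (by simpa using biprod.inl ≫= hv)
    · exact (h₂ W hW).1 (by simpa using biprod.inr ≫= hv)
  · obtain ⟨v₁, hv₁⟩ := (h₁ W hW).2 (biprod.inl ≫ q)
    obtain ⟨v₂, hv₂⟩ := (h₂ W hW).2 (biprod.inr ≫ q)
    exact ⟨biprod.desc v₁ v₂, biprod.hom_ext' _ _ (by simpa using hv₁) (by simpa using hv₂)⟩

lemma hom₃ {k : ℤ} {T T' : Triangle C} (hT : T ∈ distTriang C) (hT' : T' ∈ distTriang C)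
    (f : T ⟶ T') (h₁ : IsGEIso t k f.hom₁) (h₂ : IsGEIso t k f.hom₂) : IsGEIso t k f.hom₃ := by
  have h₁' : IsGEIso t k (f.hom₁⟦(1 : ℤ)⟧') := (h₁.mono (by omega)).shift 1
  have h₂' : IsGEIso t k (f.hom₂⟦(1 : ℤ)⟧') := (h₂.mono (by omega)).shift 1
  exact fun W hW => ⟨injective_comp_hom₃ hT hT' f W (h₁' W hW).1 (h₂ W hW).1 (h₂' W hW).2,
    surjective_comp_hom₃ hT hT' f W (h₁ W hW).1 (h₁' W hW).2 (h₂ W hW).2⟩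

end IsGEIso

lemma IsMIso.isGEIso {m k : ℤ} {P E : C} {p : P ⟶ E} (hp : IsMIso t m p) (hmk : m < k) :
    IsGEIso t k p := by
  obtain ⟨Q, g, h, hT, hQ⟩ := hp
  intro W hW
  refine ⟨fun v₁ v₂ hv => ?_, fun x => ?_⟩
  · replace hv : p ≫ v₁ = p ≫ v₂ := hv
    obtain ⟨s, hs⟩ := Triangle.yoneda_exact₂ _ hT (v₁ - v₂)
      (by change p ≫ (v₁ - v₂) = 0; rw [Preadditive.comp_sub, hv, sub_self])
    rw [← sub_eq_zero, hs, t.zero_of_isLE_of_isGE s (m - 1) k (by omega) ⟨hQ⟩ ⟨hW⟩]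
    exact comp_zero
  · obtain ⟨u, hu⟩ := Triangle.yoneda_exact₂ _ (inv_rot_of_distTriang _ hT) x
      (t.zero_of_isLE_of_isGE _ m k hmk ⟨t.le_shift (m - 1) (-1) m (by omega) Q hQ⟩ ⟨hW⟩)
    exact ⟨u, hu.symm⟩

lemma nonempty_retract_of_isGEIso {k l : ℤ} {P T A E : C} (ρ : Retract P T) {φ : T ⟶ A}
    {p : P ⟶ E} (hφ : IsGEIso t k φ) (hp : IsGEIso t l p) (hA : t.ge l A) (hE : t.ge k E)
    (hlk : l ≤ k) : Nonempty (Retract E A) := by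
  obtain ⟨u, hu : p ≫ u = ρ.i ≫ φ⟩ := (hp A hA).2 (ρ.i ≫ φ)
  obtain ⟨v, hv : φ ≫ v = ρ.r ≫ p⟩ := (hφ E hE).2 (ρ.r ≫ p)
  refine ⟨⟨u, v, (hp E (t.ge_antitone hlk E hE)).1 ?_⟩⟩
  change p ≫ u ≫ v = p ≫ 𝟙 E
  rw [reassoc_of% hu, hv, ρ.retract_assoc, Category.comp_id]

variable (t) in
/-- For every `m`, a retract of `P` maps to an object of `L` that is `≥ m` by a morphism
inducing an isomorphism on `τ^{≥ m + c}`: a truncation of `P` taken inside `L`. -/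
def HasGEApprox (L : Set C) (c : ℤ) (P : C) : Prop :=
  ∀ m : ℤ, ∃ (T A : C) (_ : Retract P T) (φ : T ⟶ A), A ∈ L ∧ t.ge m A ∧ IsGEIso t (m + c) φ

namespace HasGEApprox

lemma mono {L L' : Set C} {c c' : ℤ} {P : C} (h : HasGEApprox t L c P) (hL : L ⊆ L')
    (hc : c ≤ c') : HasGEApprox t L' c' P := fun m => by
  obtain ⟨T, A, ρ, φ, hA, hAm, hφ⟩ := h m
  exact ⟨T, A, ρ, φ, hL hA, hAm, hφ.mono (by omega)⟩

lemma of_retract {L : Set C} {c : ℤ} {X Y : C} (h : HasGEApprox t L c Y) (ρ : Retract X Y) :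
    HasGEApprox t L c X := fun m => by
  obtain ⟨T, A, ρ', φ, hA, hAm, hφ⟩ := h m
  exact ⟨T, A, ρ.trans ρ', φ, hA, hAm, hφ⟩

lemma of_isZero {L : Set C} (c : ℤ) {X : C} (hXL : X ∈ L) (hX : IsZero X) :
    HasGEApprox t L c X := fun m =>
  ⟨X, X, Retract.refl X, 𝟙 X, hXL, (t.isGE_of_isZero hX m).ge, IsGEIso.id _ X⟩

lemma shift {L : Set C} {c : ℤ} {X : C} (h : HasGEApprox t L c X) (a : ℤ)
    (hL : ∀ A ∈ L, A⟦a⟧ ∈ L) : HasGEApprox t L c (X⟦a⟧) := fun m => by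
  obtain ⟨T, A, ρ, φ, hA, hAm, hφ⟩ := h (m + a)
  exact ⟨T⟦a⟧, A⟦a⟧, ρ.map (shiftFunctor C a), φ⟦a⟧', hL A hA,
    t.ge_shift (m + a) a m (by omega) A hAm, IsGEIso.shift a (hφ.mono (by omega))⟩

lemma biprod [HasBinaryBiproducts C] {L : Set C} {c : ℤ} {X Y : C}
    (hX : HasGEApprox t L c X) (hY : HasGEApprox t L c Y) (hL : ∀ A ∈ L, ∀ B ∈ L, (A ⊞ B) ∈ L) :
    HasGEApprox t L c (X ⊞ Y) := fun m => by
  obtain ⟨TX, AX, ρX, φX, hAX, hAXm, hφX⟩ := hX m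
  obtain ⟨TY, AY, ρY, φY, hAY, hAYm, hφY⟩ := hY m
  exact ⟨TX ⊞ TY, AX ⊞ AY, ρX.biprod ρY, biprod.map φX φY, hL AX hAX AY hAY,
    (t.isGE₂ _ (binaryBiproductTriangle_distinguished AX AY) m ⟨hAXm⟩ ⟨hAYm⟩).ge,
    hφX.biprod hφY⟩

end HasGEApprox

lemma HasGEApprox.cone {L₁ L₂ : Set C} {c₁ c₂ : ℤ} {X Y E : C} {f : X ⟶ Y} {g : Y ⟶ E}
    {h : E ⟶ X⟦(1 : ℤ)⟧} (hT : Triangle.mk f g h ∈ distTriang C) (hX : HasGEApprox t L₁ c₁ X)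
    (hY : HasGEApprox t L₂ c₂ Y) (hc₁ : 0 ≤ c₁) (hc₂ : 0 ≤ c₂) :
    HasGEApprox t (coneSet L₁ L₂) (c₁ + c₂ + 1) E := fun m => by
  obtain ⟨TX, AX, ρX, φX, hAX, hAXm, hφX⟩ := hX (m + 1)
  obtain ⟨TY, AY, ρY, φY, hAY, hAYm, hφY⟩ := hY (m + 1 + c₁)
  obtain ⟨TE, u, v, hσ⟩ := distinguished_cocone_triangle (ρX.r ≫ f ≫ ρY.i)
  obtain ⟨ρE⟩ := nonempty_retract_obj₃ hT hσ ρX ρY rfl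
  obtain ⟨α, hα : φX ≫ α = (ρX.r ≫ f ≫ ρY.i) ≫ φY⟩ := (hφX AY hAYm).2 _
  obtain ⟨Z, uα, vα, hZ⟩ := distinguished_cocone_triangle α
  obtain ⟨φ, hφ₂, hφ₃⟩ := complete_distinguished_triangle_morphism _ _ hσ hZ φX φY hα.symm
  refine ⟨TE, Z, ρE, φ, ⟨AX, AY, α, uα, vα, hZ, hAX, hAY⟩, ?_, ?_⟩
  · exact (t.isGE₂ _ (rot_of_distTriang _ hZ) m ⟨t.ge_antitone (by omega) _ hAYm⟩
      ⟨t.ge_shift (m + 1) 1 m (by omega) _ hAXm⟩).ge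
  · exact IsGEIso.hom₃ hσ hZ (Triangle.homMk _ _ φX φY φ hα.symm hφ₂ hφ₃)
      (hφX.mono (by omega)) (hφY.mono (by omega))

lemma nonempty_retract_of_hasGEApprox_of_isMIso {L : Set C} {c a : ℤ} {P E : C}
    (hP : HasGEApprox t L c P) (hc : 0 ≤ c) (hE : t.ge a E) {p : P ⟶ E}
    (hp : IsMIso t (a - c - 1) p) : ∃ A ∈ L, Nonempty (Retract E A) := by
  obtain ⟨T, A, ρ, φ, hA, hAm, hφ⟩ := hP (a - c)
  exact ⟨A, hA, nonempty_retract_of_isGEIso ρ hφ (hp.isGEIso (by omega)) hAm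
    (t.ge_antitone (by omega) E hE) (by omega)⟩

variable [HasBinaryBiproducts C]

lemma hasGEApprox_addClosure {𝒜 : Set C} {c : ℤ}
    (h𝒜 : ∀ X ∈ 𝒜, HasGEApprox t (addClosure 𝒜) c X) {P : C} (hP : addClosure 𝒜 P) :
    HasGEApprox t (addClosure 𝒜) c P := by
  induction hP with
  | of h => exact h𝒜 _ h
  | zero h => exact HasGEApprox.of_isZero c (addClosure.zero h) h
  | iso e _ ih => exact ih.of_retract (Retract.ofIso e.symm)
  | shift a _ ih => exact ih.shift a fun A hA => addClosure.shift a hA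
  | biprod _ _ ihX ihY => exact ihX.biprod ihY fun A hA B hB => addClosure.biprod hA hB
  | retract i r hir _ ih => exact ih.of_retract ⟨i, r, hir⟩

lemma hasGEApprox_addClosure_of_mem {S : Set C} {G : C} (hG : G ∈ S) {a b c : ℤ}
    (ha : t.ge a G) (hb : t.le b G) (hc : b - a < c) : HasGEApprox t (addClosure S) c G := by
  intro m
  by_cases hm : m ≤ a
  · exact ⟨G, G, Retract.refl G, 𝟙 G, addClosure.of hG, t.ge_antitone hm G ha, IsGEIso.id _ G⟩
  · exact ⟨G, 0, Retract.refl G, 0, addClosure.zero (isZero_zero C),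
      (t.isGE_of_isZero (isZero_zero C) m).ge, IsGEIso.of_isZero 0 hb (isZero_zero C) (by omega)⟩

lemma exists_hasGEApprox_level {S : Set C} {c : ℤ}
    (hS : ∀ G ∈ S, HasGEApprox t (addClosure S) c G) (hc : 0 ≤ c) :
    ∀ n : ℕ, ∃ c' : ℤ, 0 ≤ c' ∧ ∀ P ∈ level S n, HasGEApprox t (level S n) c' P
  | 0 => ⟨0, le_rfl, fun _ => hasGEApprox_addClosure fun X hX => absurd hX (Set.notMem_empty X)⟩
  | 1 => ⟨c, hc, fun _ => hasGEApprox_addClosure hS⟩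
  | n + 2 => by
    obtain ⟨c', hc', hlevel⟩ := exists_hasGEApprox_level hS hc (n + 1)
    refine ⟨c' + c + 1, by omega, fun _ => hasGEApprox_addClosure ?_⟩
    rintro E ⟨X, Y, f, g, h, hT, hX, hY⟩
    exact ((hlevel X hX).cone hT (hasGEApprox_addClosure hS hY) hc' hc).mono
      (fun _ => addClosure.of) le_rfl

end Paper

open Paper in
/-- For a Noetherian stack satisfying approximation by compact complexes (abstracted:
a triangulated category with a bounded subcategory `Db` (= `D^b_coh`), a subcategory
`Perf` of `Db` approximating every object of `Db` in all degrees, and `G ∈ Db` whose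
thick closure approximates every object of `Db`): `Perf ⊆ ⟨G⟩ₙ` iff `⟨G⟩ₙ = Db`. -/
theorem statement10 {C : Type u} [Category.{v} C] [Preadditive C] [HasZeroObject C]
    [HasShift C ℤ] [∀ n : ℤ, (shiftFunctor C n).Additive] [Pretriangulated C]
    [HasBinaryBiproducts C] [HasCountableCoproducts C]
    (t : Triangulated.TStructure C) (Db Perf : Set C)
    (hDb : IsThick Db) (hPerf : Perf ⊆ Db)
    (hbounded : ∀ E ∈ Db, ∃ a b : ℤ, t.ge a E ∧ t.le b E)
    (G : C) (hG : G ∈ Db) (n : ℕ)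
    (happroxG : ∀ E ∈ Db, ∀ m : ℤ, ∃ P ∈ thickClosure ({G} : Set C),
      ∃ p : P ⟶ E, IsMIso t m p)
    (happroxPerf : ∀ E ∈ Db, ∀ m : ℤ, ∃ P ∈ Perf, ∃ p : P ⟶ E, IsMIso t m p) :
    Perf ⊆ level ({G} : Set C) n ↔ level ({G} : Set C) n = Db := by
  refine ⟨fun hPerfLevel => ?_, fun h => h ▸ hPerf⟩
  refine (level_subset_of_isThick hDb (Set.singleton_subset_iff.2 hG) n).antisymm
    fun E hE => ?_
  obtain ⟨a, -, haE, -⟩ := hbounded E hE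
  obtain ⟨aG, bG, haG, hbG⟩ := hbounded G hG
  have hGapprox : HasGEApprox t (addClosure {G}) (max (bG - aG + 1) 0) G :=
    hasGEApprox_addClosure_of_mem (Set.mem_singleton G) haG hbG
      (lt_max_of_lt_left (lt_add_one _))
  obtain ⟨c, hc, hlevel⟩ :=
    exists_hasGEApprox_level (S := {G}) (by rintro _ rfl; exact hGapprox) (le_max_right _ _) n
  obtain ⟨P, hP, p, hp⟩ := happroxPerf E hE (a - c - 1)
  obtain ⟨A, hA, ⟨ρ⟩⟩ :=
    nonempty_retract_of_hasGEApprox_of_isMIso (hlevel P (hPerfLevel hP)) hc haE hp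
  exact mem_level_of_retract ρ hA
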